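/- Let H0, H* ∈ H^stub_s(d) with E(M(H0 Δ H*)) = k+1 ≥ 5, and suppose M(H0 Δ H*) consists of exactly one minimal alternating cycle C* containing the edges e1 = {a,b}_{H0,t}, e2 = {b,c}_{H*,t}, e4 = {a,d}_{H0,s} and e5 = {a,f}_{H*,u} with a, b, c, d, f pairwise distinct. If the hyperarc (u,{f,c}) belongs to neither A(H0) nor A(H*), then the hypergraph H̃ with A(H̃) = (A(H*) \ {M⁻¹(e2), M⁻¹(e5)}) ∪ {M⁻¹(e1), (u,{f,c})} satisfies: H̃ ∈ H^stub_s(d), E(M(H0 Δ H̃)) = k−1, and E(M(H̃ Δ H*)) ≤ k. -/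
import Mathlib


open Finset

/-!
Common setting: fix a vertex set `V` and two tail labels `τ, σ`, encoded as
`Bool` with `true = τ` and `false = σ`.  A hyperarc is a pair `(t, {a,b})`
consisting of a tail label and an unordered pair of vertices; it is degenerate
if `a = b`.  A hypergraph is a finite set of pairwise distinct non-degenerate
hyperarcs; `H^stub_s(d)` is the set of such hypergraphs realizing the degree
sequence `d` (stub degree of each vertex and number of hyperarcs per tail).
`M(H0 Δ H*)` is the edge-labeled multigraph whose edges record the hyperarcs
of the symmetric difference together with the hypergraph (`lab`, `true = H0`)
containing them and their tail.
-/

/-- Tail labels: `true = τ`, `false = σ`. -/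
abbrev Tail := Bool

/-- A hyperarc: a tail label together with an unordered pair of vertices. -/
abbrev Hyperarc (V : Type*) := Tail × Sym2 V

/-- A (stub) degree sequence: the stub degree of every vertex together with the
number of hyperarcs carrying each tail label. -/
structure DegreeSeq (V : Type*) where
  vdeg : V → ℕ
  tdeg : Tail → ℕ

/-- `A` is a hypergraph in `H^stub_s(d)`: a set of pairwise distinct (this is
automatic for a `Finset`) non-degenerate hyperarcs realizing the degree
sequence `D`. -/
def Realizes {V : Type*} [DecidableEq V] (A : Finset (Hyperarc V)) (D : DegreeSeq V) : Prop :=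
  (∀ e ∈ A, ¬ e.2.IsDiag) ∧
  (∀ v : V, (A.filter fun e => v ∈ e.2).card = D.vdeg v) ∧
  (∀ t : Tail, (A.filter fun e => e.1 = t).card = D.tdeg t)

/-- An edge `{a,b}_{X,t}` of the multigraph `M(H0 Δ H*)`: its label (`true`
means it comes from `H0`, `false` from `H*`), its tail `t` and its endpoints
`{a,b}`. -/
structure MEdge (V : Type*) where
  lab : Bool
  tail : Tail
  ends : Sym2 V
deriving DecidableEq

/-- `M⁻¹`: the hyperarc underlying an edge of `M(H0 Δ H*)`. -/
def MEdge.arc {V : Type*} (e : MEdge V) : Hyperarc V := (e.tail, e.ends)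

/-- The edge set of the edge-labeled multigraph `M(H0 Δ H*)`: every hyperarc of
`A(H0) \ A(H*)` becomes an edge labeled `H0` (i.e. `true`) and every hyperarc of
`A(H*) \ A(H0)` becomes an edge labeled `H*` (i.e. `false`). -/
def mEdges {V : Type*} [DecidableEq V] (A0 A1 : Finset (Hyperarc V)) : Finset (MEdge V) :=
  ((A0 \ A1).image fun h => ⟨true, h.1, h.2⟩) ∪
    ((A1 \ A0).image fun h => ⟨false, h.1, h.2⟩)

/-- An alternating cycle in the edge set `E` of `M(H0 Δ H*)`: a closed trail
(cyclic sequence of pairwise distinct edges, consecutive edges sharing an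
endpoint) whose edges alternate between label `H0` and label `H*`. -/
structure AltCycle {V : Type*} (E : Finset (MEdge V)) where
  /-- the length of the cycle -/
  n : ℕ
  two_le : 2 ≤ n
  /-- the cyclic sequence of edges -/
  edge : ℕ → MEdge V
  /-- the cyclic sequence of vertices visited -/
  vert : ℕ → V
  edge_periodic : ∀ i, edge (i + n) = edge i
  vert_periodic : ∀ i, vert (i + n) = vert i
  mem : ∀ i, edge i ∈ E
  inj : ∀ i < n, ∀ j < n, edge i = edge j → i = j
  ends_eq : ∀ i, (edge i).ends = s(vert i, vert (i + 1))
  alt : ∀ i, (edge i).lab = !(edge (i + 1)).lab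

/-- The set of edges used by an alternating cycle. -/
def AltCycle.edges {V : Type*} [DecidableEq V] {E : Finset (MEdge V)} (C : AltCycle E) :
    Finset (MEdge V) :=
  (Finset.range C.n).image C.edge

/-- A minimal alternating cycle: one containing no proper alternating subcycle. -/
def AltCycle.Minimal {V : Type*} [DecidableEq V] {E : Finset (MEdge V)} (C : AltCycle E) : Prop :=
  ∀ C' : AltCycle E, C'.edges ⊆ C.edges → C'.edges = C.edges

/-- `|f_{X,t}(M(H0 Δ H*))|`: the number of edges of `M(H0 Δ H*)` labeled with
hypergraph `l` (`true = H0`) and tail `t`. -/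
def labTailCount {V : Type*} [DecidableEq V] (A0 A1 : Finset (Hyperarc V))
    (l : Bool) (t : Tail) : ℕ :=
  ((mEdges A0 A1).filter fun e => e.lab = l ∧ e.tail = t).card

/-- `H` and `H'` differ by a single hypershuffle move, i.e. they are adjacent in
`G(H^stub_s(d))`: their symmetric difference consists of 4 hyperarcs,
`M(H Δ H')` is an alternating cycle, and the number of tail-τ edges labeled `H`
equals the number of tail-τ edges labeled `H'`. -/
def HypershuffleAdj {V : Type*} [DecidableEq V] (A0 A1 : Finset (Hyperarc V)) : Prop :=
  ((A0 \ A1) ∪ (A1 \ A0)).card = 4 ∧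
  (∃ C : AltCycle (mEdges A0 A1), C.edges = mEdges A0 A1) ∧
  labTailCount A0 A1 true true = labTailCount A0 A1 false true

lemma card_mEdges {V : Type*} [DecidableEq V] (A0 A1 : Finset (Hyperarc V)) :
    (mEdges A0 A1).card = (A0 \ A1).card + (A1 \ A0).card := by
  rw [mEdges, Finset.card_union_of_disjoint, Finset.card_image_of_injective,
    Finset.card_image_of_injective]
  · intro x y h
    simp only [MEdge.mk.injEq] at h
    exact Prod.ext h.2.1 h.2.2
  · intro x y h
    simp only [MEdge.mk.injEq] at h
    exact Prod.ext h.2.1 h.2.2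
  · rw [Finset.disjoint_left]
    intro e he he'
    simp only [Finset.mem_image] at he he'
    obtain ⟨x, -, rfl⟩ := he
    obtain ⟨y, -, hy⟩ := he'
    simp at hy

lemma mem_mEdges_true {V : Type*} [DecidableEq V] (A0 A1 : Finset (Hyperarc V))
    (t : Tail) (p : Sym2 V) :
    (⟨true, t, p⟩ : MEdge V) ∈ mEdges A0 A1 ↔ (t, p) ∈ A0 \ A1 := by
  simp [mEdges, MEdge.mk.injEq, Prod.ext_iff]

lemma mem_mEdges_false {V : Type*} [DecidableEq V] (A0 A1 : Finset (Hyperarc V))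
    (t : Tail) (p : Sym2 V) :
    (⟨false, t, p⟩ : MEdge V) ∈ mEdges A0 A1 ↔ (t, p) ∈ A1 \ A0 := by
  simp [mEdges, MEdge.mk.injEq, Prod.ext_iff]

lemma card_filter_pair {α : Type*} [DecidableEq α] {x y : α} (h : x ≠ y)
    (P : α → Prop) [DecidablePred P] :
    (({x, y} : Finset α).filter P).card =
      (if P x then 1 else 0) + (if P y then 1 else 0) := by
  rw [Finset.filter_insert, Finset.filter_singleton]
  by_cases h1 : P x <;> by_cases h2 : P y <;> simp [h1, h2, h]

lemma count_helper {V : Type*} [DecidableEq V] (v a b c f : V)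
    (hab : a ≠ b) (hac : a ≠ c) (haf : a ≠ f) (hbc : b ≠ c) (hbf : b ≠ f) (hcf : c ≠ f) :
    ((if v ∈ s(b, c) then 1 else 0) + (if v ∈ s(a, f) then 1 else 0) : ℕ) =
      (if v ∈ s(a, b) then 1 else 0) + (if v ∈ s(f, c) then 1 else 0) := by
  simp only [Sym2.mem_iff]
  by_cases h1 : v = a <;> by_cases h2 : v = b <;> by_cases h3 : v = c <;>
    by_cases h4 : v = f <;> simp_all

lemma filter_count_v {V : Type*} [DecidableEq V] (v a b c f : V) (t u : Tail)
    (hab : a ≠ b) (hac : a ≠ c) (haf : a ≠ f) (hbc : b ≠ c) (hbf : b ≠ f) (hcf : c ≠ f)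
    (hs12 : ((t, s(b, c)) : Hyperarc V) ≠ (u, s(a, f)))
    (ht12 : ((t, s(a, b)) : Hyperarc V) ≠ (u, s(f, c))) :
    (({(t, s(b, c)), (u, s(a, f))} : Finset (Hyperarc V)).filter
        (fun e => v ∈ e.2)).card =
      (({(t, s(a, b)), (u, s(f, c))} : Finset (Hyperarc V)).filter
        (fun e => v ∈ e.2)).card := by
  rw [card_filter_pair hs12, card_filter_pair ht12]
  exact count_helper v a b c f hab hac haf hbc hbf hcf

lemma filter_count_t {V : Type*} [DecidableEq V] (p1 p2 q1 q2 : Sym2 V) (t u t' : Tail)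
    (hs12 : ((t, p1) : Hyperarc V) ≠ (u, p2))
    (ht12 : ((t, q1) : Hyperarc V) ≠ (u, q2)) :
    (({(t, p1), (u, p2)} : Finset (Hyperarc V)).filter (fun e => e.1 = t')).card =
      (({(t, q1), (u, q2)} : Finset (Hyperarc V)).filter (fun e => e.1 = t')).card := by
  rw [card_filter_pair hs12, card_filter_pair ht12]

/-- Case 4.2 of the proof of Lemma `connected_when_one_cycle`.
`M(H0 Δ H*)` has `k + 1 ≥ 5` edges and is exactly one minimal alternating cycle
`C*` containing `e1 = {a,b}_{H0,t}`, `e2 = {b,c}_{H*,t}`, `e4 = {a,d}_{H0,s}`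
and `e5 = {a,f}_{H*,u}` with `a,b,c,d,f` pairwise distinct.  If
`(u,{f,c}) ∉ A(H0) ∪ A(H*)`, then `H̃` with
`A(H̃) = (A(H*) \ {M⁻¹(e2), M⁻¹(e5)}) ∪ {M⁻¹(e1), (u,{f,c})}` satisfies
`H̃ ∈ H^stub_s(d)`, `E(M(H0 Δ H̃)) = k − 1` and `E(M(H̃ Δ H*)) ≤ k`. -/
theorem one_cycle_case4_2 {V : Type*} [DecidableEq V]
    (D : DegreeSeq V) (A0 A1 : Finset (Hyperarc V))
    (h0 : Realizes A0 D) (h1 : Realizes A1 D) (k : ℕ)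
    (hcard : (mEdges A0 A1).card = k + 1) (hk : 5 ≤ k + 1)
    (C : AltCycle (mEdges A0 A1)) (hmin : C.Minimal) (hall : C.edges = mEdges A0 A1)
    (a b c d f : V) (t s u : Tail)
    (hdist : ([a, b, c, d, f] : List V).Pairwise (· ≠ ·))
    (he1 : (⟨true, t, s(a, b)⟩ : MEdge V) ∈ C.edges)
    (he2 : (⟨false, t, s(b, c)⟩ : MEdge V) ∈ C.edges)
    (he4 : (⟨true, s, s(a, d)⟩ : MEdge V) ∈ C.edges)
    (he5 : (⟨false, u, s(a, f)⟩ : MEdge V) ∈ C.edges)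
    (he6 : (u, s(f, c)) ∉ A0 ∪ A1)
    (At : Finset (Hyperarc V))
    (hAt : At = (A1 \ {(t, s(b, c)), (u, s(a, f))}) ∪ {(t, s(a, b)), (u, s(f, c))}) :
    Realizes At D ∧ (mEdges A0 At).card = k - 1 ∧ (mEdges At A1).card ≤ k := by
  -- distinctness facts
  have hp1 := List.pairwise_cons.1 hdist
  have hp2 := List.pairwise_cons.1 hp1.2
  have hp3 := List.pairwise_cons.1 hp2.2
  have hab : a ≠ b := hp1.1 b (by simp)
  have hac : a ≠ c := hp1.1 c (by simp)
  have haf : a ≠ f := hp1.1 f (by simp)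
  have hbc : b ≠ c := hp2.1 c (by simp)
  have hbf : b ≠ f := hp2.1 f (by simp)
  have hcf : c ≠ f := hp3.1 f (by simp)
  clear hp1 hp2 hp3 hdist hmin he4
  -- arc membership facts
  rw [hall] at he1 he2 he5
  rw [mem_mEdges_true, Finset.mem_sdiff] at he1
  rw [mem_mEdges_false, Finset.mem_sdiff] at he2 he5
  simp only [Finset.mem_union, not_or] at he6
  obtain ⟨ht1A0, ht1A1⟩ := he1
  obtain ⟨hs1A1, hs1A0⟩ := he2
  obtain ⟨hs2A1, hs2A0⟩ := he5
  obtain ⟨ht2A0, ht2A1⟩ := he6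
  set s1 : Hyperarc V := (t, s(b, c)) with hs1def
  set s2 : Hyperarc V := (u, s(a, f)) with hs2def
  set t1 : Hyperarc V := (t, s(a, b)) with ht1def
  set t2 : Hyperarc V := (u, s(f, c)) with ht2def
  set S : Finset (Hyperarc V) := {s1, s2} with hSdef
  set T : Finset (Hyperarc V) := {t1, t2} with hTdef
  -- pairwise distinctness of the four arcs
  have hs12 : s1 ≠ s2 := by
    simp only [hs1def, hs2def, Prod.ext_iff, Sym2.eq_iff, ne_eq, not_and]
    rintro - (⟨h, -⟩ | ⟨-, h⟩) <;> simp_all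
  have ht12 : t1 ≠ t2 := by
    simp only [ht1def, ht2def, Prod.ext_iff, Sym2.eq_iff, ne_eq, not_and]
    rintro - (⟨h, -⟩ | ⟨h, -⟩) <;> simp_all
  have hs1t1 : s1 ≠ t1 := by
    simp only [hs1def, ht1def, Prod.ext_iff, Sym2.eq_iff, ne_eq, not_and]
    rintro - (⟨h, -⟩ | ⟨-, h⟩) <;> simp_all
  have hs1t2 : s1 ≠ t2 := by
    simp only [hs1def, ht2def, Prod.ext_iff, Sym2.eq_iff, ne_eq, not_and]
    rintro - (⟨h, -⟩ | ⟨h, -⟩) <;> simp_all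
  have hs2t1 : s2 ≠ t1 := by
    simp only [hs2def, ht1def, Prod.ext_iff, Sym2.eq_iff, ne_eq, not_and]
    rintro - (⟨-, h⟩ | ⟨h, -⟩) <;> simp_all
  have hs2t2 : s2 ≠ t2 := by
    simp only [hs2def, ht2def, Prod.ext_iff, Sym2.eq_iff, ne_eq, not_and]
    rintro - (⟨h, -⟩ | ⟨h, -⟩) <;> simp_all
  -- basic set facts
  have hmemS : ∀ x, x ∈ S ↔ x = s1 ∨ x = s2 := by
    intro x; simp [hSdef]
  have hmemT : ∀ x, x ∈ T ↔ x = t1 ∨ x = t2 := by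
    intro x; simp [hTdef]
  have hmemAt : ∀ x, x ∈ At ↔ (x ∈ A1 ∧ ¬(x = s1 ∨ x = s2)) ∨ (x = t1 ∨ x = t2) := by
    intro x
    rw [hAt, Finset.mem_union, Finset.mem_sdiff, hmemS x, hmemT x]
  have hunion : At ∪ S = A1 ∪ T := by
    ext x
    simp only [Finset.mem_union, hmemAt, hmemS, hmemT]
    constructor
    · rintro ((⟨h, -⟩ | h) | (rfl | rfl))
      · exact Or.inl h
      · exact Or.inr h
      · exact Or.inl hs1A1
      · exact Or.inl hs2A1
    · rintro (h | h)
      · by_cases hx : x = s1 ∨ x = s2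
        · exact Or.inr hx
        · exact Or.inl (Or.inl ⟨h, hx⟩)
      · exact Or.inl (Or.inr h)
  have hdisjAtS : Disjoint At S := by
    rw [Finset.disjoint_left]
    intro x hx hxS
    rw [hmemAt] at hx
    rw [hmemS] at hxS
    rcases hx with ⟨-, hx⟩ | (rfl | rfl)
    · exact hx hxS
    · rcases hxS with h | h
      · exact hs1t1 h.symm
      · exact hs2t1 h.symm
    · rcases hxS with h | h
      · exact hs1t2 h.symm
      · exact hs2t2 h.symm
  have hdisjA1T : Disjoint A1 T := by
    rw [Finset.disjoint_right]
    intro x hxT hxA1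
    rw [hmemT] at hxT
    rcases hxT with rfl | rfl
    · exact ht1A1 hxA1
    · exact ht2A1 hxA1
  -- the key counting principle
  have key : ∀ (P : Hyperarc V → Prop) (inst : DecidablePred P),
      (S.filter P).card = (T.filter P).card →
      (At.filter P).card = (A1.filter P).card := by
    intro P inst hST
    have hx1 : ((At ∪ S).filter P).card = (At.filter P).card + (S.filter P).card := by
      rw [Finset.filter_union,
        Finset.card_union_of_disjoint (Finset.disjoint_filter_filter hdisjAtS)]
    have hx2 : ((A1 ∪ T).filter P).card = (A1.filter P).card + (T.filter P).card := by
      rw [Finset.filter_union,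
        Finset.card_union_of_disjoint (Finset.disjoint_filter_filter hdisjA1T)]
    rw [hunion, hx2] at hx1
    omega
  have hS2 : S.card = 2 := by
    rw [hSdef, Finset.card_insert_of_notMem (by simp [hs12]), Finset.card_singleton]
  have hT2 : T.card = 2 := by
    rw [hTdef, Finset.card_insert_of_notMem (by simp [ht12]), Finset.card_singleton]
  refine ⟨⟨?_, ?_, ?_⟩, ?_, ?_⟩
  · -- non-degenerate
    intro e he
    rw [hmemAt] at he
    rcases he with ⟨he, -⟩ | (rfl | rfl)
    · exact h1.1 e he
    · simpa [ht1def] using hab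
    · simpa [ht2def] using hcf.symm
  · -- vertex degrees
    intro v
    rw [← h1.2.1 v]
    refine key _ _ ?_
    rw [hSdef, hTdef]
    exact filter_count_v v a b c f t u hab hac haf hbc hbf hcf
      (hs1def ▸ hs2def ▸ hs12) (ht1def ▸ ht2def ▸ ht12)
  · -- tail degrees
    intro t'
    rw [← h1.2.2 t']
    refine key _ _ ?_
    rw [hSdef, hTdef]
    exact filter_count_t _ _ _ _ t u t'
      (hs1def ▸ hs2def ▸ hs12) (ht1def ▸ ht2def ▸ ht12)
  · -- card of mEdges A0 At
    have hA0diff : A0 \ At = (A0 \ A1).erase t1 := by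
      ext x
      simp only [Finset.mem_sdiff, Finset.mem_erase, hmemAt, not_or, not_and_or,
        not_not, ne_eq]
      constructor
      · rintro ⟨hxA0, h1', h2', h3'⟩
        refine ⟨h2', hxA0, ?_⟩
        rcases h1' with h | h
        · exact h
        · rcases h with rfl | rfl
          · exact absurd hxA0 hs1A0
          · exact absurd hxA0 hs2A0
      · rintro ⟨hxt1, hxA0, hxA1⟩
        refine ⟨hxA0, Or.inl hxA1, hxt1, ?_⟩
        rintro rfl
        exact ht2A0 hxA0
    have hAtdiff : At \ A0 = ((A1 \ A0) \ S) ∪ {t2} := by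
      ext x
      simp only [Finset.mem_sdiff, Finset.mem_union, Finset.mem_singleton, hmemAt, hmemS]
      constructor
      · rintro ⟨⟨hxA1, hxS⟩ | (rfl | rfl), hxA0⟩
        · exact Or.inl ⟨⟨hxA1, hxA0⟩, hxS⟩
        · exact absurd ht1A0 hxA0
        · exact Or.inr rfl
      · rintro (⟨⟨hxA1, hxA0⟩, hxS⟩ | rfl)
        · exact ⟨Or.inl ⟨hxA1, hxS⟩, hxA0⟩
        · exact ⟨Or.inr (Or.inr rfl), ht2A0⟩
    have hSsub : S ⊆ A1 \ A0 := by
      intro x hx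
      rw [hmemS] at hx
      rcases hx with rfl | rfl
      · exact Finset.mem_sdiff.2 ⟨hs1A1, hs1A0⟩
      · exact Finset.mem_sdiff.2 ⟨hs2A1, hs2A0⟩
    have ht1mem : t1 ∈ A0 \ A1 := Finset.mem_sdiff.2 ⟨ht1A0, ht1A1⟩
    have hcards : (A0 \ A1).card + (A1 \ A0).card = k + 1 := by
      rw [← card_mEdges]; exact hcard
    have h01 : 1 ≤ (A0 \ A1).card := Finset.card_pos.2 ⟨t1, ht1mem⟩
    have h12' : 2 ≤ (A1 \ A0).card := by
      calc 2 = S.card := hS2.symm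
        _ ≤ (A1 \ A0).card := Finset.card_le_card hSsub
    have hc1 : (A0 \ At).card = (A0 \ A1).card - 1 := by
      rw [hA0diff, Finset.card_erase_of_mem ht1mem]
    have hc2 : (At \ A0).card = (A1 \ A0).card - 2 + 1 := by
      rw [hAtdiff, Finset.card_union_of_disjoint, Finset.card_sdiff_of_subset hSsub, hS2,
        Finset.card_singleton]
      rw [Finset.disjoint_singleton_right, Finset.mem_sdiff, Finset.mem_sdiff]
      rintro ⟨⟨h, -⟩, -⟩
      exact ht2A1 h
    rw [card_mEdges, hc1, hc2]
    omega
  · -- card of mEdges At A1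
    have hAtA1 : At \ A1 = T := by
      ext x
      simp only [Finset.mem_sdiff, hmemAt, hmemT]
      constructor
      · rintro ⟨⟨hxA1, -⟩ | h, hxA1'⟩
        · exact absurd hxA1 hxA1'
        · exact h
      · rintro (rfl | rfl)
        · exact ⟨Or.inr (Or.inl rfl), ht1A1⟩
        · exact ⟨Or.inr (Or.inr rfl), ht2A1⟩
    have hA1At : A1 \ At = S := by
      ext x
      simp only [Finset.mem_sdiff, hmemAt, hmemS, not_or, not_and_or, not_not]
      constructor
      · rintro ⟨hxA1, h | h, -, -⟩
        · exact absurd hxA1 h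
        · exact h
      · rintro (rfl | rfl)
        · exact ⟨hs1A1, Or.inr (Or.inl rfl), fun h => hs1t1 h, fun h => hs1t2 h⟩
        · exact ⟨hs2A1, Or.inr (Or.inr rfl), fun h => hs2t1 h, fun h => hs2t2 h⟩
    rw [card_mEdges, hAtA1, hA1At, hT2, hS2]
    omega
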